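/- Let a < b < c. Suppose the impulse gradient is mapped by the short flow map as ∇m_c = T_{[b,c]}ᵀ ∇m_b T_{[b,c]} (omitting the Hessian term). Then substituting this into the particle-to-grid transfer m_i = ∑_p w_ip (m_c^p + ∇m_c^p (x_i − x_p)) / ∑_p w_ip, and using the first-order approximation T_{[b,c]}(x_i − x_p) ≈ ψ(x_i) − ψ(x_p) together with m_b(ψ(x_i)) − m_b(ψ(x_p)) ≈ ∇m_b (ψ(x_i) − ψ(x_p)) and m_c^p = T_{[b,c]}ᵀ m_b(ψ(x_p)), the transferred grid impulse reduces to m_i = (∑_p w_ip T_{[b,c]}^{pᵀ} / ∑_p w_ip) m_b(ψ(x_i)); i.e., the gradient-augmented transfer without Hessian is equivalent to PIC-style interpolation of the backward Jacobian Tᵀ applied to the backtracked impulse. -/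

import Mathlib

/-! Per particle, the Hessian-free gradient term `(Tᵀ ∇m_b T)(x_i − x_p)` becomes
`Tᵀ ∇m_b (ψ x_i − ψ x_p) = Tᵀ (m_b(ψ x_i) − m_b(ψ x_p))`, which cancels the backtracked part
`Tᵀ m_b(ψ x_p)` of `m_c^p`, leaving `Tᵀ m_b(ψ x_i)`. Since this vector no longer depends on the
particle except through `T`, the weighted average is the averaged `Tᵀ` applied to `m_b(ψ x_i)`. -/

open Matrix

theorem Matrix.transpose_mulVec_add_congr_mulVec_of_sub_eq {R n : Type*} [Ring R] [Fintype n]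
    (T G : Matrix n n R) {u v dx : n → R} (h : u - v = G *ᵥ (T *ᵥ dx)) :
    Tᵀ *ᵥ v + (Tᵀ * G * T) *ᵥ dx = Tᵀ *ᵥ u := by
  rw [← mulVec_mulVec, ← mulVec_mulVec, ← h, ← mulVec_add, add_sub_cancel]

theorem Matrix.smul_sum_smul_mulVec {R ι m n : Type*} [CommSemiring R] [Fintype n]
    (s : Finset ι) (c : R) (w : ι → R) (A : ι → Matrix m n R) (v : n → R) :
    c • ∑ p ∈ s, w p • (A p *ᵥ v) = (c • ∑ p ∈ s, w p • A p) *ᵥ v := by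
  simp only [smul_mulVec, sum_mulVec]

theorem p2g_no_hessian_is_pic_general {n : ℕ} {ι : Type*} [Fintype ι]
    (w : ι → ℝ)
    (xp : ι → (Fin n → ℝ)) (xi : Fin n → ℝ)
    (T : ι → Matrix (Fin n) (Fin n) ℝ)
    (ψ : (Fin n → ℝ) → (Fin n → ℝ))
    (mb : (Fin n → ℝ) → (Fin n → ℝ))
    (Gb : Matrix (Fin n) (Fin n) ℝ)
    (mc : ι → (Fin n → ℝ)) (gmc : ι → Matrix (Fin n) (Fin n) ℝ)
    (hmc : ∀ p, mc p = (T p).transpose.mulVec (mb (ψ (xp p))))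
    (hgmc : ∀ p, gmc p = (T p).transpose * Gb * T p)
    (happrox₁ : ∀ p, (T p).mulVec (xi - xp p) = ψ xi - ψ (xp p))
    (happrox₂ : ∀ p, mb (ψ xi) - mb (ψ (xp p)) = Gb.mulVec (ψ xi - ψ (xp p))) :
    (∑ p, w p)⁻¹ • (∑ p, w p • (mc p + (gmc p).mulVec (xi - xp p)))
      = ((∑ p, w p)⁻¹ • ∑ p, w p • (T p).transpose).mulVec (mb (ψ xi)) := by
  have particle_term : ∀ p, mc p + gmc p *ᵥ (xi - xp p) = (T p)ᵀ *ᵥ mb (ψ xi) := fun p => by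
    rw [hmc, hgmc]
    exact transpose_mulVec_add_congr_mulVec_of_sub_eq _ _ (by rw [happrox₁, happrox₂])
  simp only [particle_term]
  exact smul_sum_smul_mulVec _ _ _ _ _

/-- The gradient-augmented particle-to-grid transfer without the Hessian
    term reduces, to first order, to PIC-style interpolation of the backward Jacobian
    transpose applied to the backtracked impulse. -/
theorem p2g_no_hessian_is_pic {n : ℕ} {ι : Type*} [Fintype ι]
    (w : ι → ℝ) (hw : ∀ p, 0 ≤ w p) (hwsum : 0 < ∑ p, w p)
    (xp : ι → (Fin n → ℝ)) (xi : Fin n → ℝ)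
    (T : ι → Matrix (Fin n) (Fin n) ℝ)
    (ψ : (Fin n → ℝ) → (Fin n → ℝ))
    (mb : (Fin n → ℝ) → (Fin n → ℝ))
    (Gb : Matrix (Fin n) (Fin n) ℝ)
    (mc : ι → (Fin n → ℝ)) (gmc : ι → Matrix (Fin n) (Fin n) ℝ)
    (hmc : ∀ p, mc p = (T p).transpose.mulVec (mb (ψ (xp p))))
    (hgmc : ∀ p, gmc p = (T p).transpose * Gb * T p)
    (happrox₁ : ∀ p, (T p).mulVec (xi - xp p) = ψ xi - ψ (xp p))
    (happrox₂ : ∀ p, mb (ψ xi) - mb (ψ (xp p)) = Gb.mulVec (ψ xi - ψ (xp p))) :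
    (∑ p, w p)⁻¹ • (∑ p, w p • (mc p + (gmc p).mulVec (xi - xp p)))
      = ((∑ p, w p)⁻¹ • ∑ p, w p • (T p).transpose).mulVec (mb (ψ xi)) :=
  p2g_no_hessian_is_pic_general w xp xi T ψ mb Gb mc gmc hmc hgmc happrox₁ happrox₂
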